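/- arXiv:2302.11155 — 2 statements merged into one kernel-verified Lean document; each statement's English description precedes it below -/
import Mathlib

section
/- Fix r ∈ (0,1) and q with 0 < q < 3r²/(2 + r), and let F be as defined. Suppose g₀ ∈ (0,1) satisfies F(g₀, q) = 0 and F(g, q) > 0 for all g ∈ (g₀, 1). Then there exists a differentiable function g : [0,∞) → ℝ with g(0) = g₀, g'(η) = √(F(g(η), q)) for all η ≥ 0, g strictly increasing on [0,∞), g(η) < 1 for all η, and g(η) → 1 as η → ∞. -/
open Filter

/-- The integration constant `C(q)` (for fixed `r`). -/
noncomputable def Ccoef (r q : ℝ) : ℝ := r * (3 * r ^ 2 - q * (2 + r)) / ((1 - r) * (4 - r ^ 2))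

/-- The right-hand side `F(g,q)` of the reduced first-order ODE (for fixed `r`). -/
noncomputable def Ffun (r q g : ℝ) : ℝ :=
  (1 - q) / (1 - r) * g ^ (2 - 2 * r) - 2 * (3 - q) / (2 - r) * g ^ (2 - r)
    + 3 * g ^ (2 : ℝ) - 2 / (2 + r) * g ^ (2 + r) - Ccoef r q

/-!
The profile is the inverse of the time map `Φ(y) = ∫_{g₀}^y dt / √F(t, q)`. Since `F(·, q)` vanishes
at `g₀` with positive slope, `1 / √F` is integrable at `g₀` and `Φ` is finite on `[g₀, 1)`. Since
`F(1, q) = ∂_g F(1, q) = 0`, `F(g, q) ≤ C (1 - g)²` near `1`, so `Φ` diverges logarithmically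
at `1`. Hence `Φ` is an increasing bijection `[g₀, 1) → [0, ∞)` whose inverse solves `g' = √F(g, q)` for
`η > 0`; at `η = 0` the equation follows because the derivative has the limit `√F(g₀, q)`.
-/

open Set Topology MeasureTheory intervalIntegral

theorem StrictMonoOn.strictMonoOn_of_rightInvOn {α β : Type*} [LinearOrder α] [LinearOrder β]
    {f : α → β} {g : β → α} {s : Set α} {t : Set β} (hf : StrictMonoOn f s)
    (hg : MapsTo g t s) (hfg : RightInvOn g f t) : StrictMonoOn g t := by
  intro x hx y hy hxy
  by_contra! h
  have := hf.monotoneOn (hg hy) (hg hx) h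
  rw [hfg hx, hfg hy] at this
  exact this.not_gt hxy

theorem MonotoneOn.tendsto_atTop_of_forall_lt {g : ℝ → ℝ} {x₀ b : ℝ}
    (hg : MonotoneOn g (Ici x₀)) (hlt : ∀ x, x₀ ≤ x → g x < b)
    (hsup : ∀ c < b, ∃ x, x₀ ≤ x ∧ c < g x) : Tendsto g atTop (𝓝 b) := by
  refine tendsto_order.2 ⟨fun c hc => ?_, fun c hc => ?_⟩
  · obtain ⟨x, hx, hcx⟩ := hsup c hc
    exact eventually_atTop.2 ⟨x, fun y hy => hcx.trans_le (hg hx (hx.trans hy) hy)⟩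
  · exact eventually_atTop.2 ⟨x₀, fun y hy => (hlt y hy).trans hc⟩

theorem hasDerivWithinAt_Ici_of_forall_hasDerivAt_comp {g v : ℝ → ℝ} {x₀ : ℝ} {s : Set ℝ}
    (hg : ContinuousWithinAt g (Ici x₀) x₀) (hd : ∀ x, x₀ < x → HasDerivAt g (v (g x)) x)
    (hmaps : MapsTo g (Ioi x₀) s) (hv : ContinuousWithinAt v s (g x₀)) :
    HasDerivWithinAt g (v (g x₀)) (Ici x₀) x₀ := by
  have hg' : ContinuousWithinAt g (Ioi x₀) x₀ := hg.mono Ioi_subset_Ici_self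
  refine hasDerivWithinAt_Ici_of_tendsto_deriv
    (fun x hx => (hd x hx).differentiableAt.differentiableWithinAt) hg' self_mem_nhdsWithin ?_
  refine (hv.tendsto.comp (tendsto_nhdsWithin_iff.2 ⟨hg', ?_⟩)).congr' ?_
  · exact eventually_nhdsWithin_of_forall fun x hx => hmaps hx
  · filter_upwards [self_mem_nhdsWithin] with x hx using ((hd x hx).deriv).symm

section TimeMap

variable {Φ v : ℝ → ℝ} {a b : ℝ}

theorem surjOn_Ico_Ici_of_tendsto_atTop (hab : a < b) (hΦa : Φ a = 0)
    (hΦc : ContinuousOn Φ (Ico a b)) (hΦb : Tendsto Φ (𝓝[<] b) atTop) :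
    SurjOn Φ (Ico a b) (Ici 0) := by
  intro η hη
  obtain ⟨y, hηy, hy⟩ := ((hΦb.eventually_ge_atTop η).and (Ioo_mem_nhdsLT hab)).exists
  obtain ⟨x, hx, rfl⟩ := intermediate_value_Icc hy.1.le (hΦc.mono (Icc_subset_Ico_right hy.2))
    (show η ∈ Icc (Φ a) (Φ y) from ⟨hΦa ▸ hη, hηy⟩)
  exact ⟨x, ⟨hx.1, hx.2.trans_lt hy.2⟩, rfl⟩

theorem exists_hasDerivWithinAt_of_inverse (hab : a < b) (hΦa : Φ a = 0)
    (hΦc : ContinuousOn Φ (Ico a b)) (hΦd : ∀ y ∈ Ioo a b, HasDerivAt Φ (v y)⁻¹ y)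
    (hΦb : Tendsto Φ (𝓝[<] b) atTop) (hv : ∀ y ∈ Ioo a b, 0 < v y)
    (hva : ContinuousWithinAt v (Ico a b) a) :
    ∃ g : ℝ → ℝ, g 0 = a ∧ (∀ η, 0 ≤ η → HasDerivWithinAt g (v (g η)) (Ici 0) η) ∧
      StrictMonoOn g (Ici 0) ∧ MapsTo g (Ici 0) (Ico a b) ∧ Tendsto g atTop (𝓝 b) := by
  have hΦmono : StrictMonoOn Φ (Ico a b) :=
    strictMonoOn_of_deriv_pos (convex_Ico a b) hΦc fun y hy => by
      rw [interior_Ico] at hy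
      exact (hΦd y hy).deriv ▸ inv_pos.2 (hv y hy)
  have hsurj := surjOn_Ico_Ici_of_tendsto_atTop hab hΦa hΦc hΦb
  set g := Function.invFunOn Φ (Ico a b)
  have hmaps : MapsTo g (Ici 0) (Ico a b) := hsurj.mapsTo_invFunOn
  have hright : RightInvOn g Φ (Ici 0) := hsurj.rightInvOn_invFunOn
  have hleft : LeftInvOn g Φ (Ico a b) := hΦmono.injOn.leftInvOn_invFunOn
  have ha : a ∈ Ico a b := left_mem_Ico.2 hab
  have hΦnonneg : ∀ y ∈ Ico a b, 0 ≤ Φ y := fun y hy => hΦa ▸ hΦmono.monotoneOn ha hy hy.1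
  have hg0 : g 0 = a := by simpa [hΦa] using hleft ha
  have hgmono : StrictMonoOn g (Ici 0) := hΦmono.strictMonoOn_of_rightInvOn hmaps hright
  have himage : Ico a b ⊆ g '' Ici 0 := fun y hy => ⟨Φ y, hΦnonneg y hy, hleft hy⟩
  have hinterior : MapsTo g (Ioi 0) (Ioo a b) := fun η hη =>
    ⟨hg0 ▸ hgmono self_mem_Ici (Ioi_subset_Ici_self hη) hη, (hmaps (Ioi_subset_Ici_self hη)).2⟩
  have hderiv : ∀ η, 0 < η → HasDerivAt g (v (g η)) η := by
    intro η hη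
    have hcont : ContinuousAt g η :=
      continuousAt_of_monotoneOn_of_image_mem_nhds hgmono.monotoneOn (Ici_mem_nhds hη)
        (mem_of_superset (Ioo_mem_nhds (hinterior hη).1 (hinterior hη).2)
          (Ioo_subset_Ico_self.trans himage))
    have hinv : ∀ᶠ ζ in 𝓝 η, Φ (g ζ) = ζ :=
      eventually_of_mem (Ici_mem_nhds hη) fun ζ hζ => hright hζ
    simpa using HasDerivAt.of_local_left_inverse hcont (hΦd _ (hinterior hη))
      (inv_pos.2 (hv _ (hinterior hη))).ne' hinv
  have hcont0 : ContinuousWithinAt g (Ici 0) 0 :=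
    continuousWithinAt_right_of_monotoneOn_of_image_mem_nhdsWithin hgmono.monotoneOn
      self_mem_nhdsWithin (hg0 ▸ mem_of_superset (Ico_mem_nhdsGE hab) himage)
  refine ⟨g, hg0, fun η hη => ?_, hgmono, hmaps, ?_⟩
  · rcases hη.eq_or_lt with rfl | hη
    · exact hasDerivWithinAt_Ici_of_forall_hasDerivAt_comp hcont0 hderiv
        (hinterior.mono_right Ioo_subset_Ico_self) (hg0 ▸ hva)
    · exact (hderiv η hη).hasDerivWithinAt
  · refine hgmono.monotoneOn.tendsto_atTop_of_forall_lt (fun η hη => (hmaps hη).2) fun c hc => ?_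
    obtain ⟨y, hcy, hy⟩ := (((eventually_gt_nhds hc).filter_mono nhdsWithin_le_nhds).and
      (Ico_mem_nhdsLT hab)).exists
    exact ⟨Φ y, hΦnonneg y hy, (hleft hy).symm ▸ hcy⟩

theorem continuousOn_primitive_Ico {f : ℝ → ℝ}
    (hf : ∀ y ∈ Ico a b, IntervalIntegrable f volume a y) :
    ContinuousOn (fun y => ∫ t in a..y, f t) (Ico a b) := by
  intro y hy
  obtain ⟨z, hyz, hzb⟩ := exists_between hy.2
  have hz : z ∈ Ico a b := ⟨hy.1.trans hyz.le, hzb⟩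
  have hcont := continuousOn_primitive_interval' (hf z hz) left_mem_uIcc
  rw [uIcc_of_le hz.1] at hcont
  refine (hcont y ⟨hy.1, hyz.le⟩).mono_of_mem_nhdsWithin ?_
  exact mem_of_superset (inter_mem_nhdsWithin _ (Iio_mem_nhds hyz))
    fun t ht => ⟨ht.1.1, ht.2.le⟩

theorem exists_hasDerivWithinAt_of_integral_inv (hab : a < b) (hvc : ContinuousOn v (Ico a b))
    (hv : ∀ y ∈ Ioo a b, 0 < v y)
    (hint : ∀ y ∈ Ico a b, IntervalIntegrable (fun t => (v t)⁻¹) volume a y)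
    (hdiv : Tendsto (fun y => ∫ t in a..y, (v t)⁻¹) (𝓝[<] b) atTop) :
    ∃ g : ℝ → ℝ, g 0 = a ∧ (∀ η, 0 ≤ η → HasDerivWithinAt g (v (g η)) (Ici 0) η) ∧
      StrictMonoOn g (Ici 0) ∧ MapsTo g (Ici 0) (Ico a b) ∧ Tendsto g atTop (𝓝 b) := by
  have hinvc : ContinuousOn (fun t => (v t)⁻¹) (Ioo a b) :=
    (hvc.mono Ioo_subset_Ico_self).inv₀ fun t ht => (hv t ht).ne'
  refine exists_hasDerivWithinAt_of_inverse hab integral_same (continuousOn_primitive_Ico hint)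
    (fun y hy => ?_) hdiv hv (hvc a (left_mem_Ico.2 hab))
  exact integral_hasDerivAt_right (hint y (Ioo_subset_Ico_self hy))
    (hinvc.stronglyMeasurableAtFilter isOpen_Ioo y hy) (hinvc.continuousAt (Ioo_mem_nhds hy.1 hy.2))

end TimeMap

section InverseIntegrability

variable {v : ℝ → ℝ} {a b : ℝ}

theorem intervalIntegrable_of_continuousOn_Ioo {f : ℝ → ℝ} {m : ℝ} (hf : ContinuousOn f (Ioo a b))
    (hm : m ∈ Ioo a b) (ham : IntervalIntegrable f volume a m) :
    ∀ y ∈ Ico a b, IntervalIntegrable f volume a y := by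
  intro y hy
  rcases le_total y m with hym | hmy
  · exact ham.mono_set (uIcc_subset_uIcc_left (mem_uIcc_of_le hy.1 hym))
  · exact ham.trans ((hf.mono (Icc_subset_Ioo hm.1 hy.2)).intervalIntegrable_of_Icc hmy)

theorem intervalIntegrable_inv_of_mul_sqrt_le {m c : ℝ} (ham : a ≤ m) (hc : 0 < c)
    (hvc : ContinuousOn v (Ioc a m)) (hv : ∀ t ∈ Ioc a m, c * √(t - a) ≤ v t) :
    IntervalIntegrable (fun t => (v t)⁻¹) volume a m := by
  have hpos : ∀ t ∈ Ioc a m, 0 < c * √(t - a) := fun t ht =>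
    mul_pos hc (Real.sqrt_pos.2 (sub_pos.2 ht.1))
  have hvpos : ∀ t ∈ Ioc a m, 0 < v t := fun t ht => (hpos t ht).trans_le (hv t ht)
  have hdom : IntervalIntegrable (fun t => c⁻¹ * (t - a) ^ (-(1 / 2) : ℝ)) volume a m := by
    have := (intervalIntegrable_rpow' (a := a - a) (b := m - a)
      (by norm_num : (-1 : ℝ) < -(1 / 2))).comp_sub_right a
    simp only [sub_add_cancel] at this
    exact this.const_mul _
  refine hdom.mono_fun ?_ ?_ <;> rw [uIoc_of_le ham]
  · exact (hvc.inv₀ fun t ht => (hvpos t ht).ne').aestronglyMeasurable measurableSet_Ioc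
  · refine ae_restrict_of_forall_mem measurableSet_Ioc fun t ht => ?_
    have hta : 0 ≤ t - a := sub_nonneg.2 ht.1.le
    show ‖(v t)⁻¹‖ ≤ ‖c⁻¹ * (t - a) ^ (-(1 / 2) : ℝ)‖
    rw [Real.norm_of_nonneg (inv_nonneg.2 (hvpos t ht).le),
      Real.norm_of_nonneg (by positivity), Real.rpow_neg hta, ← Real.sqrt_eq_rpow, ← mul_inv]
    exact inv_anti₀ (hpos t ht) (hv t ht)

theorem tendsto_integral_inv_of_le_mul_sub {s K : ℝ} (hsb : s < b) (hvc : ContinuousOn v (Ico s b))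
    (hv : ∀ t ∈ Ico s b, 0 < v t) (hvK : ∀ t ∈ Ico s b, v t ≤ K * (b - t)) :
    Tendsto (fun y => ∫ t in s..y, (v t)⁻¹) (𝓝[<] b) atTop := by
  have hs : s ∈ Ico s b := left_mem_Ico.2 hsb
  have hK : 0 < K := pos_of_mul_pos_left ((hv s hs).trans_le (hvK s hs)) (sub_pos.2 hsb).le
  have hlow : ∀ y ∈ Ioo s b,
      K⁻¹ * (Real.log (b - s) - Real.log (b - y)) ≤ ∫ t in s..y, (v t)⁻¹ := by
    intro y hy
    have hsub : Icc s y ⊆ Ico s b := Icc_subset_Ico_right hy.2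
    have hcalc : ∫ t in s..y, K⁻¹ * (b - t)⁻¹ = K⁻¹ * (Real.log (b - s) - Real.log (b - y)) := by
      have h0 : (0 : ℝ) ∉ uIcc (b - y) (b - s) := by
        rw [uIcc_of_le (by linarith [hy.1])]
        exact fun h => h.1.not_gt (sub_pos.2 hy.2)
      rw [intervalIntegral.integral_const_mul, integral_comp_sub_left (fun t => t⁻¹),
        integral_inv h0, Real.log_div (by linarith [hy.2]) (by linarith [hy.2])]
    rw [← hcalc]
    refine integral_mono_on hy.1.le ?_ ?_ fun t ht => ?_
    · refine ContinuousOn.intervalIntegrable_of_Icc hy.1.le ?_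
      exact continuousOn_const.mul ((continuous_const.sub continuous_id).continuousOn.inv₀
        fun t ht => (sub_pos.2 (ht.2.trans_lt hy.2)).ne')
    · exact ContinuousOn.intervalIntegrable_of_Icc hy.1.le
        ((hvc.mono hsub).inv₀ fun t ht => (hv t (hsub ht)).ne')
    · rw [← mul_inv]
      exact inv_anti₀ (hv t (hsub ht)) (hvK t (hsub ht))
  have hlog : Tendsto (fun y => K⁻¹ * (Real.log (b - s) - Real.log (b - y))) (𝓝[<] b) atTop := by
    have hgap : Tendsto (fun y => b - y) (𝓝[<] b) (𝓝[>] 0) :=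
      tendsto_nhdsWithin_iff.2 ⟨((continuous_sub_left b).tendsto' b 0 (sub_self b)).mono_left
        nhdsWithin_le_nhds, eventually_nhdsWithin_of_forall fun y hy => mem_Ioi.2 (sub_pos.2 hy)⟩
    exact (tendsto_atTop_add_const_left _ _ (tendsto_neg_atBot_atTop.comp
      (Real.tendsto_log_nhdsGT_zero.comp hgap))).const_mul_atTop (inv_pos.2 hK)
  exact tendsto_atTop_mono' _ (eventually_of_mem (Ioo_mem_nhdsLT hsb) hlow) hlog

end InverseIntegrability

theorem HasDerivAt.eventually_mul_sub_lt {f : ℝ → ℝ} {f' c x : ℝ} (hf : HasDerivAt f f' x)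
    (hc : c < f') : ∀ᶠ t in 𝓝[>] x, c * (t - x) < f t - f x := by
  have hslope := (hasDerivAt_iff_tendsto_slope.1 hf).mono_left
    (nhdsWithin_mono x fun t (ht : x < t) => ht.ne')
  filter_upwards [hslope.eventually (lt_mem_nhds hc), self_mem_nhdsWithin] with t ht htx
  rwa [slope_def_field, lt_div_iff₀ (sub_pos.2 htx)] at ht

theorem le_add_mul_sq_of_neg_le_deriv {f f' : ℝ → ℝ} {s b B : ℝ}
    (hd : ∀ x ∈ Icc s b, HasDerivAt f (f' x) x) (hf' : ∀ x ∈ Ioo s b, -(2 * B * (b - x)) ≤ f' x)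
    {t : ℝ} (ht : t ∈ Icc s b) : f t ≤ f b + B * (b - t) ^ 2 := by
  have hd' : ∀ x ∈ Icc s b,
      HasDerivAt (fun x => f x - B * (b - x) ^ 2) (f' x + 2 * B * (b - x)) x := fun x hx =>
    ((hd x hx).sub ((((hasDerivAt_id x).const_sub b).pow 2).const_mul B)).congr_deriv
      (by simp only [id_eq]; ring)
  have hmono : MonotoneOn (fun x => f x - B * (b - x) ^ 2) (Icc s b) := by
    refine monotoneOn_of_hasDerivWithinAt_nonneg (f' := fun x => f' x + 2 * B * (b - x))
      (convex_Icc s b) (fun x hx => (hd' x hx).continuousAt.continuousWithinAt)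
      (fun x hx => ?_) fun x hx => ?_
    · rw [interior_Icc] at hx ⊢
      exact (hd' x (Ioo_subset_Icc_self hx)).hasDerivWithinAt
    · rw [interior_Icc] at hx
      linarith [hf' x hx]
  have := hmono ht (right_mem_Icc.2 (ht.1.trans ht.2)) ht.2
  simp only [sub_self] at this
  linarith

section Soliton

variable {r q : ℝ}

noncomputable def FfunDeriv (r q x : ℝ) : ℝ :=
  2 * x ^ (1 - 2 * r) * (1 - x ^ r) * ((1 - x ^ r) ^ 2 - q)

theorem Ffun_one (hr₀ : 0 < r) (hr₁ : r < 1) : Ffun r q 1 = 0 := by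
  have h1 : (1 : ℝ) - r ≠ 0 := by linarith
  have h2 : (2 : ℝ) - r ≠ 0 := by linarith
  have h3 : (2 : ℝ) + r ≠ 0 := by linarith
  have h4 : (4 : ℝ) - r ^ 2 ≠ 0 := by nlinarith
  simp only [Ffun, Ccoef, Real.one_rpow]
  field_simp
  ring

theorem hasDerivAt_Ffun (hr₀ : 0 < r) (hr₁ : r < 1) {x : ℝ} (hx : 0 < x) :
    HasDerivAt (Ffun r q) (FfunDeriv r q x) x := by
  have h1 : (1 : ℝ) - r ≠ 0 := by linarith
  have h2 : (2 : ℝ) - r ≠ 0 := by linarith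
  have h3 : (2 : ℝ) + r ≠ 0 := by linarith
  have hpow (p : ℝ) := Real.hasDerivAt_rpow_const (x := x) (p := p) (Or.inl hx.ne')
  have hF := (((((hpow (2 - 2 * r)).const_mul ((1 - q) / (1 - r))).sub
    ((hpow (2 - r)).const_mul (2 * (3 - q) / (2 - r)))).add ((hpow 2).const_mul 3)).sub
    ((hpow (2 + r)).const_mul (2 / (2 + r)))).sub_const (Ccoef r q)
  refine hF.congr_deriv ?_
  have e1 : x ^ (1 - 2 * r) * x ^ r = x ^ (1 - r) := by
    rw [← Real.rpow_add hx]; ring_nf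
  have e2 : x ^ (1 - 2 * r) * x ^ r * x ^ r = x := by
    rw [← Real.rpow_add hx, ← Real.rpow_add hx, show 1 - 2 * r + r + r = (1 : ℝ) by ring,
      Real.rpow_one]
  have e3 : x ^ (1 - 2 * r) * x ^ r * x ^ r * x ^ r = x ^ (1 + r) := by
    rw [← Real.rpow_add hx, ← Real.rpow_add hx, ← Real.rpow_add hx]; ring_nf
  rw [show (2 : ℝ) - 2 * r - 1 = 1 - 2 * r by ring, show (2 : ℝ) - r - 1 = 1 - r by ring,
    show (2 : ℝ) - 1 = 1 by norm_num, show (2 : ℝ) + r - 1 = 1 + r by ring, Real.rpow_one,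
    FfunDeriv]
  field_simp
  rw [show 1 - r * 2 = 1 - 2 * r by ring]
  linear_combination (3 - q) * e1 - 3 * e2 + e3

theorem continuousOn_Ffun (hr₀ : 0 < r) (hr₁ : r < 1) : ContinuousOn (Ffun r q) (Ioi 0) :=
  fun _ hx => (hasDerivAt_Ffun hr₀ hr₁ hx).continuousAt.continuousWithinAt

theorem FfunDeriv_pos {x : ℝ} (hr₀ : 0 < r) (hx₀ : 0 < x) (hx₁ : x < 1)
    (hq : q < (1 - x ^ r) ^ 2) : 0 < FfunDeriv r q x := by
  have hxr : x ^ r < 1 := Real.rpow_lt_one hx₀.le hx₁ hr₀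
  have := Real.rpow_pos_of_pos hx₀ (1 - 2 * r)
  unfold FfunDeriv
  exact mul_pos (by positivity [sub_pos.2 hxr]) (sub_pos.2 hq)

theorem FfunDeriv_neg {x : ℝ} (hr₀ : 0 < r) (hx₀ : 0 < x) (hx₁ : x < 1)
    (hq : (1 - x ^ r) ^ 2 < q) : FfunDeriv r q x < 0 := by
  have hxr : x ^ r < 1 := Real.rpow_lt_one hx₀.le hx₁ hr₀
  have := Real.rpow_pos_of_pos hx₀ (1 - 2 * r)
  unfold FfunDeriv
  exact mul_neg_of_pos_of_neg (by positivity [sub_pos.2 hxr]) (sub_neg.2 hq)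

/-- Otherwise `F(·, q)` would decrease from its zero at `g₀`. -/
theorem lt_sq_one_sub_rpow_of_Ffun_eq_zero (hr₀ : 0 < r) (hr₁ : r < 1) {g₀ : ℝ}
    (hg₀ : g₀ ∈ Ioo 0 1) (hzero : Ffun r q g₀ = 0) (hFpos : ∀ g ∈ Ioo g₀ 1, 0 < Ffun r q g) :
    q < (1 - g₀ ^ r) ^ 2 := by
  by_contra! hq
  obtain ⟨y, hy⟩ := exists_between hg₀.2
  have hanti : StrictAntiOn (Ffun r q) (Icc g₀ y) := by
    refine strictAntiOn_of_deriv_neg (convex_Icc g₀ y)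
      ((continuousOn_Ffun hr₀ hr₁).mono fun x hx => hg₀.1.trans_le hx.1) fun x hx => ?_
    rw [interior_Icc] at hx
    have hx₀ : 0 < x := hg₀.1.trans hx.1
    have hr : g₀ ^ r < x ^ r := Real.rpow_lt_rpow hg₀.1.le hx.1 hr₀
    have hx₁ : x ^ r < 1 := Real.rpow_lt_one hx₀.le (hx.2.trans hy.2) hr₀
    rw [(hasDerivAt_Ffun hr₀ hr₁ hx₀).deriv]
    refine FfunDeriv_neg hr₀ hx₀ (hx.2.trans hy.2) (lt_of_lt_of_le ?_ hq)
    nlinarith [Real.rpow_nonneg hg₀.1.le r]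
  have := hanti (left_mem_Icc.2 hy.1.le) (right_mem_Icc.2 hy.1.le) hy.1
  linarith [hFpos y hy]

theorem neg_le_FfunDeriv (hr₀ : 0 < r) (hr₁ : r < 1) {x : ℝ} (hx : x ∈ Icc (1 / 2) 1) :
    -(2 * (2 * |q|) * (1 - x)) ≤ FfunDeriv r q x := by
  have hx₀ : 0 < x := by linarith [hx.1]
  have hp₀ : 0 < x ^ (1 - 2 * r) := Real.rpow_pos_of_pos hx₀ _
  have hp₂ : x ^ (1 - 2 * r) ≤ 2 := by
    calc x ^ (1 - 2 * r) ≤ x ^ (-1 : ℝ) :=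
          Real.rpow_le_rpow_of_exponent_ge hx₀ hx.2 (by linarith)
      _ = x⁻¹ := Real.rpow_neg_one x
      _ ≤ 2 := by rw [inv_le_comm₀ hx₀ two_pos]; linarith [hx.1]
  have hxr : x ≤ x ^ r := by
    simpa using Real.rpow_le_rpow_of_exponent_ge hx₀ hx.2 hr₁.le
  have hr1 : x ^ r ≤ 1 := Real.rpow_le_one hx₀.le hx.2 hr₀.le
  have h1 : 0 ≤ x ^ (1 - 2 * r) * (1 - x ^ r) * ((1 - x ^ r) ^ 2 - q + |q|) := by
    have : 0 ≤ (1 - x ^ r) ^ 2 - q + |q| := by linarith [le_abs_self q, sq_nonneg (1 - x ^ r)]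
    exact mul_nonneg (mul_nonneg hp₀.le (sub_nonneg.2 hr1)) this
  have h2 : x ^ (1 - 2 * r) * (1 - x ^ r) ≤ 2 * (1 - x) :=
    mul_le_mul hp₂ (by linarith) (by linarith) zero_le_two
  unfold FfunDeriv
  linarith [mul_le_mul_of_nonneg_left h2 (abs_nonneg q)]

theorem Ffun_le_mul_sq (hr₀ : 0 < r) (hr₁ : r < 1) {t : ℝ} (ht : t ∈ Icc (1 / 2) 1) :
    Ffun r q t ≤ 2 * |q| * (1 - t) ^ 2 := by
  simpa [Ffun_one hr₀ hr₁] using le_add_mul_sq_of_neg_le_deriv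
    (fun x hx => hasDerivAt_Ffun hr₀ hr₁ (by linarith [hx.1] : (0 : ℝ) < x))
    (fun x hx => neg_le_FfunDeriv hr₀ hr₁ (Ioo_subset_Icc_self hx)) ht

theorem intervalIntegrable_inv_sqrt_Ffun (hr₀ : 0 < r) (hr₁ : r < 1) {g₀ : ℝ}
    (hg₀ : g₀ ∈ Ioo 0 1) (hzero : Ffun r q g₀ = 0) (hFpos : ∀ g ∈ Ioo g₀ 1, 0 < Ffun r q g) :
    ∀ y ∈ Ico g₀ 1, IntervalIntegrable (fun t => (√(Ffun r q t))⁻¹) volume g₀ y := by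
  have hv : ContinuousOn (fun t => √(Ffun r q t)) (Ioi 0) := (continuousOn_Ffun hr₀ hr₁).sqrt
  have hpos : ∀ t ∈ Ioo g₀ 1, 0 < √(Ffun r q t) := fun t ht => Real.sqrt_pos.2 (hFpos t ht)
  have hD : 0 < FfunDeriv r q g₀ := FfunDeriv_pos hr₀ hg₀.1 hg₀.2
    (lt_sq_one_sub_rpow_of_Ffun_eq_zero hr₀ hr₁ hg₀ hzero hFpos)
  set c := FfunDeriv r q g₀ / 2
  have hc : 0 < c := half_pos hD
  obtain ⟨m, hm, hlin⟩ : ∃ m ∈ Ioo g₀ 1, ∀ t ∈ Ioc g₀ m, c * (t - g₀) ≤ Ffun r q t := by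
    have hev := ((hasDerivAt_Ffun hr₀ hr₁ hg₀.1).eventually_mul_sub_lt
      (half_lt_self hD)).and (Ioo_mem_nhdsGT hg₀.2)
    obtain ⟨m, hm, hsub⟩ := mem_nhdsGT_iff_exists_Ioc_subset.1 hev
    refine ⟨m, (hsub ⟨hm, le_rfl⟩).2, fun t ht => ?_⟩
    have hlt := (hsub ht).1
    rw [hzero, sub_zero] at hlt
    exact hlt.le
  have hsqrt : ∀ t ∈ Ioc g₀ m, √c * √(t - g₀) ≤ √(Ffun r q t) := fun t ht =>
    Real.sqrt_mul hc.le (t - g₀) ▸ Real.sqrt_le_sqrt (hlin t ht)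
  refine intervalIntegrable_of_continuousOn_Ioo ?_ hm (intervalIntegrable_inv_of_mul_sqrt_le
    hm.1.le (Real.sqrt_pos.2 hc) (hv.mono fun t ht => hg₀.1.trans ht.1) hsqrt)
  exact (hv.mono fun t ht => hg₀.1.trans ht.1).inv₀ fun t ht => (hpos t ht).ne'

theorem tendsto_integral_inv_sqrt_Ffun (hr₀ : 0 < r) (hr₁ : r < 1) {g₀ : ℝ}
    (hg₀ : g₀ ∈ Ioo 0 1) (hzero : Ffun r q g₀ = 0) (hFpos : ∀ g ∈ Ioo g₀ 1, 0 < Ffun r q g) :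
    Tendsto (fun y => ∫ t in g₀..y, (√(Ffun r q t))⁻¹) (𝓝[<] 1) atTop := by
  have hint := intervalIntegrable_inv_sqrt_Ffun hr₀ hr₁ hg₀ hzero hFpos
  set s := max (1 / 2) ((g₀ + 1) / 2)
  have hs : s ∈ Ioo g₀ 1 := ⟨lt_max_of_lt_right (by linarith [hg₀.2]),
    max_lt (by norm_num) (by linarith [hg₀.2])⟩
  have hsub : Ico s 1 ⊆ Ioo g₀ 1 := fun t ht => ⟨hs.1.trans_le ht.1, ht.2⟩
  have hdiv : Tendsto (fun y => ∫ t in s..y, (√(Ffun r q t))⁻¹) (𝓝[<] 1) atTop := by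
    refine tendsto_integral_inv_of_le_mul_sub (K := √(2 * |q|)) hs.2
      (((continuousOn_Ffun hr₀ hr₁).mono fun t ht => hg₀.1.trans (hsub ht).1).sqrt)
      (fun t ht => Real.sqrt_pos.2 (hFpos t (hsub ht))) fun t ht => ?_
    have hle := Real.sqrt_le_sqrt
      (Ffun_le_mul_sq (q := q) hr₀ hr₁ ⟨(le_max_left _ _).trans ht.1, ht.2.le⟩)
    rwa [Real.sqrt_mul (by positivity), Real.sqrt_sq (sub_nonneg.2 ht.2.le)] at hle
  refine (tendsto_atTop_add_const_left _ (∫ t in g₀..s, (√(Ffun r q t))⁻¹) hdiv).congr' ?_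
  filter_upwards [Ioo_mem_nhdsLT hs.2] with y hy
  exact integral_add_adjacent_intervals (hint s ⟨hs.1.le, hs.2⟩)
    ((hint s ⟨hs.1.le, hs.2⟩).symm.trans (hint y ⟨hs.1.le.trans hy.1.le, hy.2⟩))

end Soliton

theorem gmKdV_soliton_profile_existence_general
    (r q : ℝ) (hr : r ∈ Set.Ioo (0 : ℝ) 1)
    (g₀ : ℝ) (hg₀ : g₀ ∈ Set.Ioo (0 : ℝ) 1)
    (hzero : Ffun r q g₀ = 0)
    (hFpos : ∀ g ∈ Set.Ioo g₀ 1, 0 < Ffun r q g) :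
    ∃ g : ℝ → ℝ,
      g 0 = g₀
      ∧ (∀ η : ℝ, 0 ≤ η →
          HasDerivWithinAt g (Real.sqrt (Ffun r q (g η))) (Set.Ici 0) η)
      ∧ StrictMonoOn g (Set.Ici 0)
      ∧ (∀ η : ℝ, 0 ≤ η → g η < 1)
      ∧ Tendsto g atTop (nhds 1) := by
  obtain ⟨hr₀, hr₁⟩ := hr
  have hv : ContinuousOn (fun x => √(Ffun r q x)) (Ico g₀ 1) :=
    ((continuousOn_Ffun hr₀ hr₁).mono fun x hx => hg₀.1.trans_le hx.1).sqrt
  obtain ⟨g, hg0, hderiv, hmono, hmaps, hlim⟩ := exists_hasDerivWithinAt_of_integral_inv hg₀.2 hv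
    (fun y hy => Real.sqrt_pos.2 (hFpos y hy))
    (intervalIntegrable_inv_sqrt_Ffun hr₀ hr₁ hg₀ hzero hFpos)
    (tendsto_integral_inv_sqrt_Ffun hr₀ hr₁ hg₀ hzero hFpos)
  exact ⟨g, hg0, hderiv, hmono, fun η hη => (hmaps hη).2, hlim⟩

/-- Problem A, soliton profile: if `g₀ ∈ (0,1)` is a zero of `F(·,q)` with
`F(·,q) > 0` on `(g₀,1)`, then the Cauchy problem `g' = √F(g,q)`, `g(0) = g₀` has a solution
on `[0,∞)` which is strictly increasing, stays below `1`, and tends to `1` at infinity. -/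
theorem gmKdV_soliton_profile_existence
    (r q : ℝ) (hr : r ∈ Set.Ioo (0 : ℝ) 1)
    (hq0 : 0 < q) (hq1 : q < 3 * r ^ 2 / (2 + r))
    (g₀ : ℝ) (hg₀ : g₀ ∈ Set.Ioo (0 : ℝ) 1)
    (hzero : Ffun r q g₀ = 0)
    (hFpos : ∀ g ∈ Set.Ioo g₀ 1, 0 < Ffun r q g) :
    ∃ g : ℝ → ℝ,
      g 0 = g₀
      ∧ (∀ η : ℝ, 0 ≤ η →
          HasDerivWithinAt g (Real.sqrt (Ffun r q (g η))) (Set.Ici 0) η)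
      ∧ StrictMonoOn g (Set.Ici 0)
      ∧ (∀ η : ℝ, 0 ≤ η → g η < 1)
      ∧ Tendsto g atTop (nhds 1) :=
  gmKdV_soliton_profile_existence_general r q hr g₀ hg₀ hzero hFpos
end

section
/- Fix r with 1/2 < r < 1 and q > 3r²/(2 + r) (so that C(q) < 0), and let F and C be as defined. Let δ > 0 and let g : [0, δ) → ℝ be continuous with g(0) = 0, g(η) > 0 for η ∈ (0, δ), differentiable on (0, δ), and satisfying g'(η) = √(F(g(η), q)) for all η ∈ (0, δ). Then lim_{η → 0⁺} g(η)/η = √(−C(q)). -/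
/-!
Since `2 - 2r`, `2 - r` and `2 + r` are positive, `F(·, q)` is continuous at `0` with
`F(0, q) = -C(q)`. Hence along the solution `g'(η) = √F(g(η), q) → √(-C(q))` as `η → 0⁺`, and by
the derivative-limit theorem at the endpoint the difference quotient `g(η)/η = (g(η) - g(0))/η`
has the same limit.
-/

open Filter

open Set Topology

theorem tendsto_slope_nhdsGT_of_tendsto_deriv {E : Type*} [NormedAddCommGroup E]
    [NormedSpace ℝ E] {f f' : ℝ → E} {a : ℝ} {L : E} (hf : ContinuousWithinAt f (Ioi a) a)
    (hderiv : ∀ᶠ x in 𝓝[>] a, HasDerivAt f (f' x) x) (hlim : Tendsto f' (𝓝[>] a) (𝓝 L)) :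
    Tendsto (slope f a) (𝓝[>] a) (𝓝 L) := by
  set s := {x | a < x ∧ HasDerivAt f (f' x) x}
  have hs : s ∈ 𝓝[>] a := inter_mem self_mem_nhdsWithin hderiv
  have hL : Tendsto (deriv f) (𝓝[>] a) (𝓝 L) :=
    hlim.congr' (hderiv.mono fun x hx => hx.deriv.symm)
  have hf' : HasDerivWithinAt f L (Ici a) a :=
    hasDerivWithinAt_Ici_of_tendsto_deriv
      (fun x hx => hx.2.differentiableAt.differentiableWithinAt) (hf.mono fun x hx => hx.1) hs hL
  exact (hasDerivWithinAt_iff_tendsto_slope' (lt_irrefl a)).1 hf'.Ioi_of_Ici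

theorem Ffun_zero (r q : ℝ) (hr₀ : -2 < r) (hr₁ : r < 1) : Ffun r q 0 = -Ccoef r q := by
  have h₁ : 2 - 2 * r ≠ 0 := by linarith
  have h₂ : 2 - r ≠ 0 := by linarith
  have h₃ : 2 + r ≠ 0 := by linarith
  simp [Ffun, Real.zero_rpow, h₁, h₂, h₃]

theorem continuousAt_Ffun_zero (r q : ℝ) (hr₀ : -2 ≤ r) (hr₁ : r ≤ 1) :
    ContinuousAt (Ffun r q) 0 := by
  have c₁ := Real.continuousAt_rpow_const 0 (2 - 2 * r) (Or.inr (by linarith))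
  have c₂ := Real.continuousAt_rpow_const 0 (2 - r) (Or.inr (by linarith))
  have c₃ := Real.continuousAt_rpow_const 0 (2 : ℝ) (Or.inr zero_le_two)
  have c₄ := Real.continuousAt_rpow_const 0 (2 + r) (Or.inr (by linarith))
  unfold Ffun
  fun_prop

theorem tendsto_sqrt_Ffun_nhds_zero (r q : ℝ) (hr₀ : -2 < r) (hr₁ : r < 1) :
    Tendsto (fun x => √(Ffun r q x)) (𝓝 0) (𝓝 √(-Ccoef r q)) := by
  rw [← Ffun_zero r q hr₀ hr₁]
  exact (continuousAt_Ffun_zero r q hr₀.le hr₁.le).sqrt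

theorem gmKdV_cuspon_local_behavior_general
    (r q : ℝ) (hr1 : 1 / 2 < r) (hr2 : r < 1)
    (δ : ℝ) (hδ : 0 < δ)
    (g : ℝ → ℝ)
    (hcont : ContinuousOn g (Set.Ico 0 δ))
    (h0 : g 0 = 0)
    (hODE : ∀ η ∈ Set.Ioo 0 δ, HasDerivAt g (Real.sqrt (Ffun r q (g η))) η) :
    Tendsto (fun η => g η / η) (nhdsWithin 0 (Set.Ioi 0))
      (nhds (Real.sqrt (-Ccoef r q))) := by
  have hg : ContinuousWithinAt g (Ioi 0) 0 :=
    (hcont 0 ⟨le_rfl, hδ⟩).mono_of_mem_nhdsWithin (Ico_mem_nhdsGT hδ)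
  have hderiv : ∀ᶠ η in 𝓝[>] 0, HasDerivAt g (√(Ffun r q (g η))) η :=
    mem_of_superset (Ioo_mem_nhdsGT hδ) hODE
  have hlim : Tendsto (fun η => √(Ffun r q (g η))) (𝓝[>] 0) (𝓝 √(-Ccoef r q)) :=
    (tendsto_sqrt_Ffun_nhds_zero r q (by linarith) hr2).comp (h0 ▸ hg.tendsto :)
  simpa [slope_fun_def_field, h0] using tendsto_slope_nhdsGT_of_tendsto_deriv hg hderiv hlim

/-- cuspon local behavior: for `1/2 < r < 1` and `q > 3r²/(2+r)`
(so `C(q) < 0`), a solution of `g' = √F(g,q)` with `g(0) = 0`, `g > 0` on `(0,δ)`,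
satisfies `g(η)/η → √(−C(q))` as `η → 0⁺`. -/
theorem gmKdV_cuspon_local_behavior
    (r q : ℝ) (hr1 : 1 / 2 < r) (hr2 : r < 1)
    (hq : q > 3 * r ^ 2 / (2 + r))
    (δ : ℝ) (hδ : 0 < δ)
    (g : ℝ → ℝ)
    (hcont : ContinuousOn g (Set.Ico 0 δ))
    (h0 : g 0 = 0)
    (hpos : ∀ η ∈ Set.Ioo 0 δ, 0 < g η)
    (hODE : ∀ η ∈ Set.Ioo 0 δ, HasDerivAt g (Real.sqrt (Ffun r q (g η))) η) :
    Tendsto (fun η => g η / η) (nhdsWithin 0 (Set.Ioi 0))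
      (nhds (Real.sqrt (-Ccoef r q))) :=
  gmKdV_cuspon_local_behavior_general r q hr1 hr2 δ hδ g hcont h0 hODE
end
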